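/- (Bound on GCN output.) Consider an l-layer GCN as defined in the context, on a simple graph with maximum node degree d − 1, with input node features X whose rows have ℓ2-norm at most B. Then |f_w(X,A)|₂ ≤ B · d^{(l−1)/2} · Π_{i=1}^{l} ‖W_i‖₂; in particular every output coordinate satisfies |f_w(X,A)[j]| ≤ B · d^{(l−1)/2} · Π_{i=1}^{l} ‖W_i‖₂. -/

import Mathlib

open Finset
open Matrix

/-- Euclidean (ℓ2) norm of a vector in `ℝ^q`. -/
noncomputable def l2norm {q : ℕ} (v : Fin q → ℝ) : ℝ := Real.sqrt (∑ j, v j ^ 2)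

/-- Spectral norm of a real matrix: the operator norm induced by the Euclidean
vector norm, i.e. `sup {‖A v‖₂ : ‖v‖₂ ≤ 1}`. -/
noncomputable def specNorm {p q : ℕ} (A : Matrix (Fin p) (Fin q) ℝ) : ℝ :=
  sSup {r : ℝ | ∃ v : Fin q → ℝ, l2norm v ≤ 1 ∧ r = l2norm (A.mulVec v)}

/-- Frobenius norm of a real matrix. -/
noncomputable def frobNorm {p q : ℕ} (A : Matrix (Fin p) (Fin q) ℝ) : ℝ :=
  Real.sqrt (∑ i, ∑ j, A i j ^ 2)

/-- `A` is the adjacency matrix of a simple undirected graph (0/1 entries, symmetric,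
zero diagonal) with maximum node degree `d - 1`. -/
def IsSimpleAdj {n : ℕ} (d : ℕ) (A : Matrix (Fin n) (Fin n) ℝ) : Prop :=
  (∀ i j, A i j = 0 ∨ A i j = 1) ∧ (∀ i j, A i j = A j i) ∧ (∀ i, A i i = 0) ∧
    ∀ i, ∑ j, A i j ≤ (d : ℝ) - 1

/-- The normalized graph Laplacian `L = D^{-1/2} (A + I) D^{-1/2}` where `D` is the
degree matrix of `Ã = A + I`; entrywise `L i j = Ã i j / (√(deg i) * √(deg j))`. -/
noncomputable def gLap {n : ℕ} (A : Matrix (Fin n) (Fin n) ℝ) :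
    Matrix (Fin n) (Fin n) ℝ :=
  Matrix.of fun i j =>
    (A + 1) i j / (Real.sqrt (∑ k, (A + 1) i k) * Real.sqrt (∑ k, (A + 1) j k))

/-- ReLU nonlinearity. -/
def relu (x : ℝ) : ℝ := max 0 x

/-- Node representations of a GCN: `H 0 = X` and
`H (k+1) = ReLU(L̃ · H k · W k)` (entrywise ReLU), where `L̃ = gLap A`.
Layer `k` (0-indexed) has weight `W k : ℝ^{dims k × dims (k+1)}`. -/
noncomputable def gcnH {n : ℕ} (A : Matrix (Fin n) (Fin n) ℝ) (dims : ℕ → ℕ)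
    (W : (k : ℕ) → Matrix (Fin (dims k)) (Fin (dims (k + 1))) ℝ)
    (X : Matrix (Fin n) (Fin (dims 0)) ℝ) : (k : ℕ) → Matrix (Fin n) (Fin (dims k)) ℝ
  | 0 => X
  | (k + 1) => (gLap A * gcnH A dims W X k * W k).map relu

/-- Output of an `l`-layer GCN: the mean readout `(1/n) 1ₙ H_{l-1} W_l`
(with 0-indexed weights, the readout weight is `W (l-1)`). -/
noncomputable def gcnOut {n : ℕ} (A : Matrix (Fin n) (Fin n) ℝ) (dims : ℕ → ℕ)
    (W : (k : ℕ) → Matrix (Fin (dims k)) (Fin (dims (k + 1))) ℝ)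
    (X : Matrix (Fin n) (Fin (dims 0)) ℝ) (l : ℕ) : Fin (dims (l - 1 + 1)) → ℝ :=
  fun j => (1 / (n : ℝ)) * ∑ i, (gcnH A dims W X (l - 1) * W (l - 1)) i j

-- helpers
noncomputable def toE {q : ℕ} (v : Fin q → ℝ) : EuclideanSpace ℝ (Fin q) :=
  (WithLp.equiv 2 (Fin q → ℝ)).symm v

lemma l2norm_eq {q : ℕ} (v : Fin q → ℝ) : l2norm v = ‖toE v‖ := by
  rw [EuclideanSpace.norm_eq]
  simp [l2norm, toE, sq_abs]

lemma l2norm_nonneg {q : ℕ} (v : Fin q → ℝ) : 0 ≤ l2norm v := Real.sqrt_nonneg _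

lemma l2norm_zero {q : ℕ} : l2norm (0 : Fin q → ℝ) = 0 := by simp [l2norm]

lemma l2norm_smul {q : ℕ} (c : ℝ) (v : Fin q → ℝ) :
    l2norm (c • v) = |c| * l2norm v := by
  rw [l2norm_eq, l2norm_eq]
  have h : toE (c • v) = c • toE v := rfl
  rw [h, norm_smul, Real.norm_eq_abs]

lemma l2norm_sum_le {ι : Type*} {q : ℕ} (s : Finset ι) (f : ι → Fin q → ℝ) :
    l2norm (∑ t ∈ s, f t) ≤ ∑ t ∈ s, l2norm (f t) := by
  have h : toE (∑ t ∈ s, f t) = ∑ t ∈ s, toE (f t) := by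
    unfold toE; exact map_sum (WithLp.linearEquiv 2 ℝ (Fin q → ℝ)).symm f s
  rw [l2norm_eq, h]
  exact (norm_sum_le s fun t => toE (f t)).trans (le_of_eq (by simp [l2norm_eq]))

lemma abs_le_l2norm {q : ℕ} (v : Fin q → ℝ) (j : Fin q) : |v j| ≤ l2norm v := by
  unfold l2norm
  exact Real.abs_le_sqrt (Finset.single_le_sum (fun i _ => sq_nonneg (v i)) (mem_univ j))

lemma specSet_ub {p q : ℕ} (A : Matrix (Fin p) (Fin q) ℝ) :
    ∀ r ∈ {r : ℝ | ∃ v : Fin q → ℝ, l2norm v ≤ 1 ∧ r = l2norm (A.mulVec v)},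
      r ≤ frobNorm A := by
  rintro r ⟨v, hv, rfl⟩
  have h0 : 0 ≤ ∑ j, v j ^ 2 := Finset.sum_nonneg fun _ _ => sq_nonneg _
  unfold l2norm at hv
  have hs : ∑ j, v j ^ 2 ≤ 1 := by
    nlinarith [Real.sq_sqrt h0, Real.sqrt_nonneg (∑ j, v j ^ 2)]
  unfold l2norm frobNorm
  apply Real.sqrt_le_sqrt
  apply Finset.sum_le_sum
  intro i _
  have := sum_mul_sq_le_sq_mul_sq Finset.univ (fun j => A i j) v
  have h1 : (A.mulVec v i) ^ 2 ≤ (∑ j, A i j ^ 2) * ∑ j, v j ^ 2 := by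
    simpa [Matrix.mulVec, dotProduct] using this
  have h2 : (∑ j, A i j ^ 2) * ∑ j, v j ^ 2 ≤ (∑ j, A i j ^ 2) * 1 :=
    mul_le_mul_of_nonneg_left hs (Finset.sum_nonneg fun _ _ => sq_nonneg _)
  calc A.mulVec v i ^ 2 ≤ _ := h1
    _ ≤ _ := h2
    _ = _ := mul_one _

lemma specSet_bdd {p q : ℕ} (A : Matrix (Fin p) (Fin q) ℝ) :
    BddAbove {r : ℝ | ∃ v : Fin q → ℝ, l2norm v ≤ 1 ∧ r = l2norm (A.mulVec v)} :=
  ⟨frobNorm A, specSet_ub A⟩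

lemma specSet_zero_mem {p q : ℕ} (A : Matrix (Fin p) (Fin q) ℝ) :
    (0 : ℝ) ∈ {r : ℝ | ∃ v : Fin q → ℝ, l2norm v ≤ 1 ∧ r = l2norm (A.mulVec v)} :=
  ⟨0, by simp [l2norm_zero], by simp [Matrix.mulVec_zero, l2norm_zero]⟩

lemma specNorm_nonneg {p q : ℕ} (A : Matrix (Fin p) (Fin q) ℝ) : 0 ≤ specNorm A :=
  le_csSup (specSet_bdd A) (specSet_zero_mem A)

lemma le_specNorm {p q : ℕ} (A : Matrix (Fin p) (Fin q) ℝ) (v : Fin q → ℝ) :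
    l2norm (A.mulVec v) ≤ specNorm A * l2norm v := by
  rcases eq_or_lt_of_le (l2norm_nonneg v) with h | h
  · have hv : v = 0 := by
      have := l2norm_eq v
      rw [← h] at this
      have h2 : toE v = 0 := by
        have := this.symm
        exact norm_eq_zero.mp this
      simpa [toE] using h2
    simp [hv, Matrix.mulVec_zero, l2norm_zero, ← h]
  · set c := l2norm v with hc
    have hu : l2norm (c⁻¹ • v) = 1 := by
      rw [l2norm_smul, abs_of_pos (inv_pos.mpr h), inv_mul_cancel₀ (ne_of_gt h)]
    have hmem : l2norm (A.mulVec (c⁻¹ • v)) ∈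
        {r : ℝ | ∃ w : Fin q → ℝ, l2norm w ≤ 1 ∧ r = l2norm (A.mulVec w)} :=
      ⟨c⁻¹ • v, le_of_eq hu, rfl⟩
    have hle : l2norm (A.mulVec (c⁻¹ • v)) ≤ specNorm A :=
      le_csSup (specSet_bdd A) hmem
    have heq : A.mulVec (c⁻¹ • v) = c⁻¹ • A.mulVec v := by
      rw [Matrix.mulVec_smul]
    rw [heq, l2norm_smul, abs_of_pos (inv_pos.mpr h)] at hle
    calc l2norm (A.mulVec v) = c * (c⁻¹ * l2norm (A.mulVec v)) := by
          field_simp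
      _ ≤ c * specNorm A := mul_le_mul_of_nonneg_left hle h.le
      _ = specNorm A * c := mul_comm _ _

lemma specNorm_transpose_le {p q : ℕ} (A : Matrix (Fin p) (Fin q) ℝ) :
    specNorm Aᵀ ≤ specNorm A := by
  apply csSup_le ⟨0, specSet_zero_mem Aᵀ⟩
  rintro r ⟨v, hv, rfl⟩
  set w := Aᵀ.mulVec v with hw
  have key : (l2norm w) ^ 2 ≤ specNorm A * l2norm w := by
    have h1 : (l2norm w) ^ 2 = ∑ j, w j ^ 2 := by
      rw [l2norm, Real.sq_sqrt (Finset.sum_nonneg fun _ _ => sq_nonneg _)]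
    have h2 : ∑ j, w j ^ 2 = ∑ i, v i * (A.mulVec w) i := by
      have hstep : ∀ j, w j ^ 2 = ∑ i, v i * (A i j * w j) := by
        intro j
        have hwj : w j = ∑ i, A i j * v i := by
          simp [hw, Matrix.mulVec, dotProduct, Matrix.transpose_apply]
        calc w j ^ 2 = (∑ i, A i j * v i) * w j := by rw [sq, ← hwj]
          _ = ∑ i, v i * (A i j * w j) := by
              rw [Finset.sum_mul]
              exact Finset.sum_congr rfl fun i _ => by ring
      rw [Finset.sum_congr rfl fun j _ => hstep j, Finset.sum_comm]
      exact Finset.sum_congr rfl fun i _ => by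
        simp [Matrix.mulVec, dotProduct, Finset.mul_sum]
    have h3 : ∑ i, v i * (A.mulVec w) i ≤ l2norm v * l2norm (A.mulVec w) := by
      unfold l2norm
      exact Real.sum_mul_le_sqrt_mul_sqrt _ _ _
    have h4 : l2norm v * l2norm (A.mulVec w) ≤ 1 * (specNorm A * l2norm w) :=
      mul_le_mul hv (le_specNorm A w) (l2norm_nonneg _)
        (le_trans (l2norm_nonneg v) hv)
    calc (l2norm w) ^ 2 = ∑ j, w j ^ 2 := h1
      _ = ∑ i, v i * (A.mulVec w) i := h2
      _ ≤ l2norm v * l2norm (A.mulVec w) := h3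
      _ ≤ 1 * (specNorm A * l2norm w) := h4
      _ = specNorm A * l2norm w := one_mul _
  rcases eq_or_lt_of_le (l2norm_nonneg w) with h | h
  · rw [← h]; exact specNorm_nonneg A
  · have := key
    rw [sq] at this
    exact le_of_mul_le_mul_right this h

lemma l2norm_relu_le {q : ℕ} (v : Fin q → ℝ) :
    l2norm (fun j => relu (v j)) ≤ l2norm v := by
  unfold l2norm
  apply Real.sqrt_le_sqrt
  apply Finset.sum_le_sum
  intro j _
  have h : relu (v j) ^ 2 ≤ v j ^ 2 := by
    unfold relu
    rcases le_total 0 (v j) with h | h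
    · rw [max_eq_right h]
    · rw [max_eq_left h]; nlinarith
  simpa using h

lemma row_mul {p q r : ℕ} (M : Matrix (Fin p) (Fin q) ℝ) (N : Matrix (Fin q) (Fin r) ℝ)
    (i : Fin p) : (M * N) i = N.transpose.mulVec (M i) := by
  funext j
  simp [Matrix.mul_apply, Matrix.mulVec, dotProduct, Matrix.transpose_apply, mul_comm]

section Graph

variable {n : ℕ} {d : ℕ} {A : Matrix (Fin n) (Fin n) ℝ}

lemma adj_nonneg (hA : IsSimpleAdj d A) (i j : Fin n) : 0 ≤ (A + 1) i j := by
  obtain ⟨h01, -, -, -⟩ := hA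
  have h : (0 : ℝ) ≤ A i j := by rcases h01 i j with h | h <;> rw [h] <;> norm_num
  simp only [Matrix.add_apply, Matrix.one_apply]
  split_ifs <;> linarith

lemma deg_ge_one (hA : IsSimpleAdj d A) (i : Fin n) : 1 ≤ ∑ k, (A + 1) i k := by
  have h1 : (A + 1) i i = 1 := by
    simp [Matrix.add_apply, Matrix.one_apply, hA.2.2.1 i]
  calc (1 : ℝ) = (A + 1) i i := h1.symm
    _ ≤ ∑ k, (A + 1) i k :=
        Finset.single_le_sum (fun k _ => adj_nonneg hA i k) (Finset.mem_univ i)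

lemma deg_le_d (hA : IsSimpleAdj d A) (i : Fin n) : ∑ k, (A + 1) i k ≤ (d : ℝ) := by
  have h : ∑ k, (A + 1) i k = (∑ k, A i k) + 1 := by
    simp [Matrix.add_apply, Matrix.one_apply, Finset.sum_add_distrib, Finset.sum_ite_eq]
  rw [h]
  linarith [hA.2.2.2 i]

lemma gLap_nonneg (hA : IsSimpleAdj d A) (i j : Fin n) : 0 ≤ gLap A i j := by
  unfold gLap
  rw [Matrix.of_apply]
  exact div_nonneg (adj_nonneg hA i j) (mul_nonneg (Real.sqrt_nonneg _) (Real.sqrt_nonneg _))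

lemma gLap_row_sum (hA : IsSimpleAdj d A) (i : Fin n) :
    ∑ j, gLap A i j ≤ Real.sqrt d := by
  have hdi : (0 : ℝ) < ∑ k, (A + 1) i k := by linarith [deg_ge_one hA i]
  have hsdi : 0 < Real.sqrt (∑ k, (A + 1) i k) := Real.sqrt_pos.mpr hdi
  calc ∑ j, gLap A i j
      ≤ ∑ j, (A + 1) i j / Real.sqrt (∑ k, (A + 1) i k) := by
        apply Finset.sum_le_sum
        intro j _
        unfold gLap
        rw [Matrix.of_apply]
        have h1 : (1 : ℝ) ≤ Real.sqrt (∑ k, (A + 1) j k) := by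
          rw [Real.one_le_sqrt]
          exact deg_ge_one hA j
        calc (A + 1) i j / (Real.sqrt (∑ k, (A + 1) i k) * Real.sqrt (∑ k, (A + 1) j k))
            ≤ (A + 1) i j / (Real.sqrt (∑ k, (A + 1) i k) * 1) := by
              gcongr
              exact adj_nonneg hA i j
          _ = (A + 1) i j / Real.sqrt (∑ k, (A + 1) i k) := by rw [mul_one]
    _ = (∑ j, (A + 1) i j) / Real.sqrt (∑ k, (A + 1) i k) := by rw [← Finset.sum_div]
    _ = Real.sqrt (∑ k, (A + 1) i k) := Real.div_sqrt
    _ ≤ Real.sqrt d := Real.sqrt_le_sqrt (deg_le_d hA i)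

end Graph

/-- Bound on the GCN output: `|f_w(X,A)|₂ ≤ B · d^{(l−1)/2} · ∏_{i=1}^{l} ‖W_i‖₂`,
and in particular every output coordinate is bounded by the same quantity. -/
theorem gcn_output_bound {n : ℕ} (d l : ℕ) (hl : 1 < l) (B : ℝ) (hB : 0 < B)
    (A : Matrix (Fin n) (Fin n) ℝ) (hA : IsSimpleAdj d A)
    (dims : ℕ → ℕ) (W : (k : ℕ) → Matrix (Fin (dims k)) (Fin (dims (k + 1))) ℝ)
    (X : Matrix (Fin n) (Fin (dims 0)) ℝ) (hX : ∀ i, l2norm (X i) ≤ B) :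
    l2norm (gcnOut A dims W X l) ≤
      B * (d : ℝ) ^ (((l : ℝ) - 1) / 2) * (∏ k ∈ Finset.range l, specNorm (W k)) ∧
    ∀ j, |gcnOut A dims W X l j| ≤
      B * (d : ℝ) ^ (((l : ℝ) - 1) / 2) * (∏ k ∈ Finset.range l, specNorm (W k)) := by
  have key : ∀ k, ∀ i, l2norm (gcnH A dims W X k i) ≤
      B * Real.sqrt d ^ k * ∏ j ∈ Finset.range k, specNorm (W j) := by
    intro k
    induction k with
    | zero => intro i; simpa [gcnH] using hX i
    | succ k ih =>
      intro i
      have hr0 : 0 ≤ B * Real.sqrt d ^ k * ∏ j ∈ Finset.range k, specNorm (W j) :=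
        mul_nonneg (mul_nonneg hB.le (pow_nonneg (Real.sqrt_nonneg _) _))
          (Finset.prod_nonneg fun j _ => specNorm_nonneg _)
      have e1 : gcnH A dims W X (k + 1) i
          = fun j => relu ((gLap A * gcnH A dims W X k * W k) i j) := rfl
      rw [e1]
      calc l2norm (fun j => relu ((gLap A * gcnH A dims W X k * W k) i j))
          ≤ l2norm ((gLap A * gcnH A dims W X k * W k) i) := l2norm_relu_le _
        _ = l2norm ((W k).transpose.mulVec ((gLap A * gcnH A dims W X k) i)) := by
            rw [row_mul]
        _ ≤ specNorm (W k).transpose * l2norm ((gLap A * gcnH A dims W X k) i) :=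
            le_specNorm _ _
        _ ≤ specNorm (W k) * l2norm ((gLap A * gcnH A dims W X k) i) :=
            mul_le_mul_of_nonneg_right (specNorm_transpose_le _) (l2norm_nonneg _)
        _ ≤ specNorm (W k) * (Real.sqrt d *
              (B * Real.sqrt d ^ k * ∏ j ∈ Finset.range k, specNorm (W j))) := by
            apply mul_le_mul_of_nonneg_left _ (specNorm_nonneg _)
            have e2 : (gLap A * gcnH A dims W X k) i
                = ∑ t, gLap A i t • gcnH A dims W X k t := by
              funext j
              simp [Matrix.mul_apply, Finset.sum_apply]
            rw [e2]
            calc l2norm (∑ t, gLap A i t • gcnH A dims W X k t)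
                ≤ ∑ t, l2norm (gLap A i t • gcnH A dims W X k t) := l2norm_sum_le _ _
              _ = ∑ t, gLap A i t * l2norm (gcnH A dims W X k t) := by
                  refine Finset.sum_congr rfl fun t _ => ?_
                  rw [l2norm_smul, abs_of_nonneg (gLap_nonneg hA i t)]
              _ ≤ ∑ t, gLap A i t *
                    (B * Real.sqrt d ^ k * ∏ j ∈ Finset.range k, specNorm (W j)) :=
                  Finset.sum_le_sum fun t _ =>
                    mul_le_mul_of_nonneg_left (ih t) (gLap_nonneg hA i t)
              _ = (∑ t, gLap A i t) *
                    (B * Real.sqrt d ^ k * ∏ j ∈ Finset.range k, specNorm (W j)) := by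
                  rw [← Finset.sum_mul]
              _ ≤ Real.sqrt d *
                    (B * Real.sqrt d ^ k * ∏ j ∈ Finset.range k, specNorm (W j)) :=
                  mul_le_mul_of_nonneg_right (gLap_row_sum hA i) hr0
        _ = B * Real.sqrt d ^ (k + 1) * ∏ j ∈ Finset.range (k + 1), specNorm (W j) := by
            rw [Finset.prod_range_succ, pow_succ]; ring
  have hr'0 : 0 ≤ B * Real.sqrt d ^ (l - 1) * ∏ j ∈ Finset.range (l - 1), specNorm (W j) :=
    mul_nonneg (mul_nonneg hB.le (pow_nonneg (Real.sqrt_nonneg _) _))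
      (Finset.prod_nonneg fun j _ => specNorm_nonneg _)
  have hout : gcnOut A dims W X l = (W (l - 1)).transpose.mulVec
      (fun t => (1 / (n : ℝ)) * ∑ i, gcnH A dims W X (l - 1) i t) := by
    funext j
    unfold gcnOut
    simp only [Matrix.mulVec, dotProduct, Matrix.transpose_apply, Matrix.mul_apply]
    have h : ∑ i, ∑ t, gcnH A dims W X (l - 1) i t * W (l - 1) t j
        = ∑ t, W (l - 1) t j * ∑ i, gcnH A dims W X (l - 1) i t := by
      rw [Finset.sum_comm]
      refine Finset.sum_congr rfl fun t _ => ?_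
      rw [Finset.mul_sum]
      exact Finset.sum_congr rfl fun i _ => by ring
    rw [h, Finset.mul_sum]
    exact Finset.sum_congr rfl fun t _ => by ring
  have hub : l2norm (fun t => (1 / (n : ℝ)) * ∑ i, gcnH A dims W X (l - 1) i t) ≤
      B * Real.sqrt d ^ (l - 1) * ∏ j ∈ Finset.range (l - 1), specNorm (W j) := by
    have hu : (fun t => (1 / (n : ℝ)) * ∑ i, gcnH A dims W X (l - 1) i t)
        = (1 / (n : ℝ)) • ∑ i, gcnH A dims W X (l - 1) i := by
      funext t
      simp [Finset.sum_apply]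
      exact Or.inl (Finset.sum_apply _ _ _).symm
    rw [hu, l2norm_smul]
    have h1 : l2norm (∑ i, gcnH A dims W X (l - 1) i) ≤
        n * (B * Real.sqrt d ^ (l - 1) * ∏ j ∈ Finset.range (l - 1), specNorm (W j)) := by
      calc l2norm (∑ i, gcnH A dims W X (l - 1) i)
          ≤ ∑ _i : Fin n, (B * Real.sqrt d ^ (l - 1) *
              ∏ j ∈ Finset.range (l - 1), specNorm (W j)) :=
            (l2norm_sum_le _ _).trans (Finset.sum_le_sum fun i _ => key (l - 1) i)
        _ = n * (B * Real.sqrt d ^ (l - 1) *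
              ∏ j ∈ Finset.range (l - 1), specNorm (W j)) := by
            simp [Finset.sum_const, Finset.card_univ, nsmul_eq_mul]
    rcases Nat.eq_zero_or_pos n with hn | hn
    · subst hn
      simpa [l2norm_zero] using hr'0
    · have hn' : (0 : ℝ) < n := by exact_mod_cast hn
      have habs : |1 / (n : ℝ)| = 1 / n := abs_of_pos (by positivity)
      rw [habs]
      calc 1 / (n : ℝ) * l2norm (∑ i, gcnH A dims W X (l - 1) i)
          ≤ 1 / (n : ℝ) * (n * (B * Real.sqrt d ^ (l - 1) *
              ∏ j ∈ Finset.range (l - 1), specNorm (W j))) :=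
            mul_le_mul_of_nonneg_left h1 (by positivity)
        _ = B * Real.sqrt d ^ (l - 1) * ∏ j ∈ Finset.range (l - 1), specNorm (W j) := by
            field_simp
  have main : l2norm (gcnOut A dims W X l) ≤
      B * Real.sqrt d ^ (l - 1) * ∏ k ∈ Finset.range l, specNorm (W k) := by
    rw [hout]
    calc l2norm ((W (l - 1)).transpose.mulVec
          (fun t => (1 / (n : ℝ)) * ∑ i, gcnH A dims W X (l - 1) i t))
        ≤ specNorm (W (l - 1)).transpose *
            l2norm (fun t => (1 / (n : ℝ)) * ∑ i, gcnH A dims W X (l - 1) i t) :=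
          le_specNorm _ _
      _ ≤ specNorm (W (l - 1)) *
            l2norm (fun t => (1 / (n : ℝ)) * ∑ i, gcnH A dims W X (l - 1) i t) :=
          mul_le_mul_of_nonneg_right (specNorm_transpose_le _) (l2norm_nonneg _)
      _ ≤ specNorm (W (l - 1)) * (B * Real.sqrt d ^ (l - 1) *
            ∏ j ∈ Finset.range (l - 1), specNorm (W j)) :=
          mul_le_mul_of_nonneg_left hub (specNorm_nonneg _)
      _ = B * Real.sqrt d ^ (l - 1) * ∏ k ∈ Finset.range l, specNorm (W k) := by
          have hprod : ∏ k ∈ Finset.range l, specNorm (W k)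
              = (∏ k ∈ Finset.range (l - 1), specNorm (W k)) * specNorm (W (l - 1)) := by
            conv_lhs => rw [show l = (l - 1) + 1 by omega]
            rw [Finset.prod_range_succ]
          rw [hprod]; ring
  have hpow : Real.sqrt d ^ (l - 1) = (d : ℝ) ^ (((l : ℝ) - 1) / 2) := by
    rw [Real.sqrt_eq_rpow, ← Real.rpow_natCast ((d : ℝ) ^ ((1 : ℝ) / 2)) (l - 1),
      ← Real.rpow_mul (Nat.cast_nonneg d)]
    congr 1
    have hc : ((l - 1 : ℕ) : ℝ) = (l : ℝ) - 1 := by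
      rw [Nat.cast_sub hl.le, Nat.cast_one]
    rw [hc]; ring
  rw [← hpow]
  exact ⟨main, fun j => (abs_le_l2norm _ j).trans main⟩
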